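/- Under the plurality rule with n voters and m alternatives with utilities i.i.d. from any distribution D on [0,1], the plurality winner (an alternative ranked first by at least ⌈n/m⌉ voters) has expected social welfare at least max(1/m, 1/n) times the maximum expected social welfare over all alternatives. -/

import Mathlib

/-!
Sorting a utility vector `x` with `Tuple.sort` shows that its `k`-th order statistic is
`x (sort x (k - 1))`: it is monotone in `k`, and measurable in `x` because it is `< a` exactly
when at least `k` coordinates are. By independence each voter's utility vector has law `D ^ m`,
so a voter contributes at most `E[X₍ₘ₎]` to the expected welfare of any alternative and exactly
`E[X₍ₘ₎]` to that of its top alternative. Hence every alternative has expected welfare at most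
`n E[X₍ₘ₎]`, while the plurality winner, ranked first by `c` voters with `n ≤ m c` (so `c ≥ 1`
when `n ≥ 1`), has expected welfare at least `c E[X₍ₘ₎]`.
-/

open MeasureTheory ProbabilityTheory

/-- The `j`-th smallest value (1-indexed) of a list of reals. -/
noncomputable def orderStat (l : List ℝ) (j : ℕ) : ℝ :=
  (l.insertionSort (· ≤ ·)).getD (j - 1) 0

open Finset

lemma insertionSort_ofFn {m : ℕ} (x : Fin m → ℝ) :
    (List.ofFn x).insertionSort (· ≤ ·) = List.ofFn (x ∘ Tuple.sort x) :=
  (List.perm_insertionSort _ _).trans ((Tuple.sort x).ofFn_comp_perm x).symm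
    |>.eq_of_sortedLE List.sortedLE_insertionSort (Tuple.monotone_sort x).sortedLE_ofFn

lemma orderStat_ofFn {m : ℕ} (x : Fin m → ℝ) (k : ℕ) :
    orderStat (List.ofFn x) k = if h : k - 1 < m then x (Tuple.sort x ⟨k - 1, h⟩) else 0 := by
  rw [orderStat, insertionSort_ofFn]
  split_ifs with h <;> simp [List.getD_eq_getElem?_getD, h]

lemma apply_sort_lt_iff_lt_card {m : ℕ} (x : Fin m → ℝ) (j : Fin m) (a : ℝ) :
    x (Tuple.sort x j) < a ↔ j < #{l | x l < a} := by
  have hcard : #{i | x (Tuple.sort x i) < a} = #{l | x l < a} :=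
    card_equiv (Tuple.sort x) (by simp)
  rw [← hcard]
  exact (Tuple.lt_card_lt_iff_apply_lt_of_monotone (Tuple.monotone_sort x)).symm

lemma measurable_apply_sort {m : ℕ} (j : Fin m) :
    Measurable fun x : Fin m → ℝ => x (Tuple.sort x j) := by
  refine measurable_of_Iio fun a => ?_
  have hcount : Measurable fun x : Fin m → ℝ => #{l | x l < a} := by
    simp only [card_filter]
    exact measurable_sum _ fun l _ =>
      Measurable.ite (measurableSet_lt (measurable_pi_apply l) measurable_const)
        measurable_const measurable_const
  have hpre : (fun x : Fin m → ℝ => x (Tuple.sort x j)) ⁻¹' Set.Iio a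
      = (fun x : Fin m → ℝ => #{l | x l < a}) ⁻¹' Set.Ioi (j : ℕ) := by
    ext x; exact apply_sort_lt_iff_lt_card x j a
  rw [hpre]
  exact hcount measurableSet_Ioi

lemma measurable_orderStat (m k : ℕ) :
    Measurable fun x : Fin m → ℝ => orderStat (List.ofFn x) k := by
  simp_rw [orderStat_ofFn]
  split_ifs
  exacts [measurable_apply_sort _, measurable_const]

lemma orderStat_ofFn_le_last {m k : ℕ} (x : Fin m → ℝ) (hk : 1 ≤ k) (hkm : k ≤ m) :
    orderStat (List.ofFn x) k ≤ orderStat (List.ofFn x) m := by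
  simp only [orderStat_ofFn, dif_pos (show k - 1 < m by omega),
    dif_pos (show m - 1 < m by omega)]
  exact Tuple.monotone_sort x (Fin.mk_le_mk.2 (by omega))

lemma orderStat_ofFn_mem_Icc {m : ℕ} {x : Fin m → ℝ} (hx : ∀ l, x l ∈ Set.Icc (0 : ℝ) 1)
    (k : ℕ) :
    orderStat (List.ofFn x) k ∈ Set.Icc (0 : ℝ) 1 := by
  rw [orderStat_ofFn]
  split_ifs
  exacts [hx _, ⟨le_rfl, zero_le_one⟩]

lemma ProbabilityTheory.iIndepFun.map_row_eq_pi {Ω ι κ β : Type*} [MeasurableSpace Ω]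
    [MeasurableSpace β] {μ : Measure Ω} [IsProbabilityMeasure μ] [Fintype κ] {X : ι → κ → Ω → β}
    (hX : ∀ i l, Measurable (X i l)) (hind : iIndepFun (fun p : ι × κ => X p.1 p.2) μ)
    {D : Measure β} (hlaw : ∀ i l, μ.map (X i l) = D) (i : ι) :
    μ.map (fun ω l => X i l ω) = Measure.pi fun _ => D := by
  have hrow : iIndepFun (fun l => X i l) μ :=
    hind.precomp (g := fun l : κ => (i, l)) fun _ _ h => (Prod.mk.inj h).2
  rw [(iIndepFun_iff_map_fun_eq_pi_map fun l => (hX i l).aemeasurable).1 hrow]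
  simp_rw [hlaw]

noncomputable def expectedOrderStat (D : Measure ℝ) (m k : ℕ) : ℝ :=
  ∫ x, orderStat (List.ofFn x) k ∂(Measure.pi fun _ : Fin m => D)

section ExpectedOrderStat

variable {D : Measure ℝ} [IsProbabilityMeasure D] {m : ℕ}

lemma ae_mem_Icc_pi (hsupp : D (Set.Icc (0 : ℝ) 1)ᶜ = 0) :
    ∀ᵐ x ∂(Measure.pi fun _ : Fin m => D), ∀ l, x l ∈ Set.Icc (0 : ℝ) 1 :=
  ae_all_iff.2 fun l =>
    (measurePreserving_eval (fun _ : Fin m => D) l).quasiMeasurePreserving.ae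
      (p := (· ∈ Set.Icc (0 : ℝ) 1)) (mem_ae_iff.2 hsupp)

lemma integrable_orderStat (hsupp : D (Set.Icc (0 : ℝ) 1)ᶜ = 0) (k : ℕ) :
    Integrable (fun x => orderStat (List.ofFn x) k) (Measure.pi fun _ : Fin m => D) := by
  refine (integrable_const (1 : ℝ)).mono' (measurable_orderStat m k).aestronglyMeasurable ?_
  filter_upwards [ae_mem_Icc_pi hsupp] with x hx
  obtain ⟨h0, h1⟩ := orderStat_ofFn_mem_Icc hx k
  rwa [Real.norm_eq_abs, abs_of_nonneg h0]

lemma expectedOrderStat_nonneg (hsupp : D (Set.Icc (0 : ℝ) 1)ᶜ = 0) (k : ℕ) :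
    0 ≤ expectedOrderStat D m k :=
  integral_nonneg_of_ae <| by
    filter_upwards [ae_mem_Icc_pi hsupp] with x hx using (orderStat_ofFn_mem_Icc hx k).1

lemma expectedOrderStat_le_last (hsupp : D (Set.Icc (0 : ℝ) 1)ᶜ = 0) {k : ℕ}
    (hk : 1 ≤ k) (hkm : k ≤ m) : expectedOrderStat D m k ≤ expectedOrderStat D m m :=
  integral_mono (integrable_orderStat hsupp k) (integrable_orderStat hsupp m)
    fun x => orderStat_ofFn_le_last x hk hkm

lemma sum_expectedOrderStat_le {ι : Type*} [Fintype ι] (hsupp : D (Set.Icc (0 : ℝ) 1)ᶜ = 0)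
    (k : ι → ℕ) (hk : ∀ i, 1 ≤ k i ∧ k i ≤ m) :
    ∑ i, expectedOrderStat D m (k i) ≤ Fintype.card ι * expectedOrderStat D m m :=
  calc ∑ i, expectedOrderStat D m (k i) ≤ ∑ _i : ι, expectedOrderStat D m m :=
        sum_le_sum fun i _ => expectedOrderStat_le_last hsupp (hk i).1 (hk i).2
    _ = Fintype.card ι * expectedOrderStat D m m := by rw [sum_const, nsmul_eq_mul, card_univ]

lemma card_mul_le_sum_expectedOrderStat {ι : Type*} [Fintype ι]
    (hsupp : D (Set.Icc (0 : ℝ) 1)ᶜ = 0) (k : ι → ℕ) {s : Finset ι} (hs : ∀ i ∈ s, k i = m) :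
    #s * expectedOrderStat D m m ≤ ∑ i, expectedOrderStat D m (k i) :=
  calc #s * expectedOrderStat D m m = ∑ i ∈ s, expectedOrderStat D m (k i) := by
        rw [sum_congr rfl fun i hi => by rw [hs i hi], sum_const, nsmul_eq_mul]
    _ ≤ ∑ i, expectedOrderStat D m (k i) :=
        sum_le_sum_of_subset_of_nonneg (subset_univ s) fun i _ _ =>
          expectedOrderStat_nonneg hsupp _

end ExpectedOrderStat

lemma integral_sum_orderStat {Ω ι : Type*} [MeasurableSpace Ω] {μ : Measure Ω} [Fintype ι]
    {m : ℕ} {V : ι → Fin m → Ω → ℝ} (hV : ∀ i l, Measurable (V i l))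
    {D : Measure ℝ} [IsProbabilityMeasure D] (hsupp : D (Set.Icc (0 : ℝ) 1)ᶜ = 0)
    (hlaw : ∀ i, μ.map (fun ω l => V i l ω) = Measure.pi fun _ => D) (k : ι → ℕ) :
    ∫ ω, ∑ i, orderStat (List.ofFn fun l => V i l ω) (k i) ∂μ =
      ∑ i, expectedOrderStat D m (k i) := by
  have hrow : ∀ i, AEMeasurable (fun ω l => V i l ω) μ := fun i =>
    (measurable_pi_lambda _ (hV i)).aemeasurable
  have hF : ∀ i, AEStronglyMeasurable (fun x => orderStat (List.ofFn x) (k i))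
      (μ.map fun ω l => V i l ω) := fun i =>
    (measurable_orderStat m (k i)).aestronglyMeasurable
  rw [integral_finsetSum _ fun i _ => ?_]
  · refine sum_congr rfl fun i _ => ?_
    rw [expectedOrderStat, ← hlaw i, integral_map (hrow i) (hF i)]
  · have hint := integrable_orderStat (m := m) hsupp (k i)
    rw [← hlaw i] at hint
    exact (integrable_map_measure (hF i) (hrow i)).1 hint

lemma card_le_mul_card_fiber_of_forall_le {ι α : Type*} [Fintype ι] [Fintype α] [DecidableEq α]
    (f : ι → α) {w : α} (hw : ∀ a, #{i | f i = a} ≤ #{i | f i = w}) :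
    Fintype.card ι ≤ Fintype.card α * #{i | f i = w} :=
  calc Fintype.card ι = ∑ a, #{i | f i = a} := (card_eq_sum_card_fiberwise fun _ _ => mem_univ _)
    _ ≤ ∑ _a : α, #{i | f i = w} := sum_le_sum fun a _ => hw a
    _ = Fintype.card α * #{i | f i = w} := by rw [sum_const, smul_eq_mul, card_univ]

lemma max_one_div_mul_le {n m c : ℕ} {E X Y : ℝ} (hE : 0 ≤ E) (hX : X ≤ n * E)
    (hY : c * E ≤ Y) (hnc : n ≤ m * c) : max (1 / (m : ℝ)) (1 / n) * X ≤ Y := by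
  have hY0 : 0 ≤ Y := (mul_nonneg c.cast_nonneg hE).trans hY
  rcases le_or_gt X 0 with hX0 | hX0
  · exact (mul_nonpos_of_nonneg_of_nonpos (by positivity) hX0).trans hY0
  have one_div_mul_le : ∀ d : ℕ, X ≤ d * Y → 1 / (d : ℝ) * X ≤ Y := by
    intro d h
    rcases d.eq_zero_or_pos with rfl | hd
    · simpa using hY0
    rwa [one_div, inv_mul_le_iff₀ (by positivity)]
  have hnc' : (n : ℝ) ≤ m * c := by exact_mod_cast hnc
  rw [max_mul_of_nonneg _ _ hX0.le]
  refine max_le (one_div_mul_le m ?_) (one_div_mul_le n ?_)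
  · calc X ≤ n * E := hX
      _ ≤ m * c * E := by gcongr
      _ ≤ m * Y := by rw [mul_assoc]; gcongr
  · have hn : n ≠ 0 := by rintro rfl; simp only [Nat.cast_zero, zero_mul] at hX; linarith
    have hc : (1 : ℝ) ≤ c := by exact_mod_cast Nat.one_le_iff_ne_zero.2 (by rintro rfl; omega)
    calc X ≤ n * E := hX
      _ ≤ n * (c * E) := by gcongr; exact le_mul_of_one_le_left hE hc
      _ ≤ n * Y := by gcongr

/-- `rank i j = 0` means voter `i` ranks alternative `j` first. -/
theorem stmt15_general {Ω : Type*} [MeasurableSpace Ω] (μ : Measure Ω) [IsProbabilityMeasure μ]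
    (n m : ℕ)
    (V : Fin n → Fin m → Ω → ℝ) (hmeas : ∀ i l, Measurable (V i l))
    (hindep : iIndepFun (fun p : Fin n × Fin m => V p.1 p.2) μ)
    (D : Measure ℝ) [IsProbabilityMeasure D] (hlaw : ∀ i l, μ.map (V i l) = D)
    (hsupp : D (Set.Icc (0 : ℝ) 1)ᶜ = 0)
    (rank : Fin n → Equiv.Perm (Fin m))
    (SW : Fin m → Ω → ℝ)
    (hSW : ∀ j ω, SW j ω =
      ∑ i, orderStat (List.ofFn fun l => V i l ω) (m - (rank i j : ℕ)))
    (w : Fin m)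
    (hw : ∀ j, (Finset.univ.filter fun i => ((rank i) j : ℕ) = 0).card ≤
      (Finset.univ.filter fun i => ((rank i) w : ℕ) = 0).card) :
    ∀ j, max (1 / (m : ℝ)) (1 / (n : ℝ)) * ∫ ω, SW j ω ∂μ ≤ ∫ ω, SW w ω ∂μ := by
  intro j
  have hm : 0 < m := w.pos
  have hwelfare : ∀ j, ∫ ω, SW j ω ∂μ = ∑ i, expectedOrderStat D m (m - rank i j) := fun j => by
    simp_rw [hSW]
    exact integral_sum_orderStat hmeas hsupp (hindep.map_row_eq_pi hmeas hlaw) _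
  have hfirst : ∀ i a, ((rank i) a : ℕ) = 0 ↔ (rank i).symm ⟨0, hm⟩ = a := fun i a => by
    rw [Equiv.symm_apply_eq, Fin.ext_iff, eq_comm]
  have hupper : ∑ i, expectedOrderStat D m (m - rank i j) ≤ n * expectedOrderStat D m m := by
    simpa using sum_expectedOrderStat_le hsupp _ fun i =>
      ⟨Nat.sub_pos_of_lt (rank i j).isLt, Nat.sub_le _ _⟩
  have hlower : (#{i | ((rank i) w : ℕ) = 0} : ℕ) * expectedOrderStat D m m ≤
      ∑ i, expectedOrderStat D m (m - rank i w) :=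
    card_mul_le_sum_expectedOrderStat hsupp _ fun i hi => by
      rw [(mem_filter.1 hi).2, Nat.sub_zero]
  have hcount : n ≤ m * #{i | ((rank i) w : ℕ) = 0} := by
    simp_rw [hfirst] at hw ⊢
    simpa using card_le_mul_card_fiber_of_forall_le _ hw
  rw [hwelfare, hwelfare]
  exact max_one_div_mul_le (expectedOrderStat_nonneg hsupp m) hupper hlower hcount

/-- Plurality: with utilities i.i.d. from any distribution on `[0,1]`, the plurality
winner `w` (the alternative ranked first by the most voters) has expected social
welfare at least `max (1/m) (1/n)` times that of any alternative.
`rank i j = 0` means voter `i` ranks alternative `j` first. -/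
theorem stmt15 {Ω : Type*} [MeasurableSpace Ω] (μ : Measure Ω) [IsProbabilityMeasure μ]
    (n m : ℕ) (hn : 0 < n) (hm : 0 < m)
    (V : Fin n → Fin m → Ω → ℝ) (hmeas : ∀ i l, Measurable (V i l))
    (hindep : iIndepFun (fun p : Fin n × Fin m => V p.1 p.2) μ)
    (D : Measure ℝ) [IsProbabilityMeasure D] (hlaw : ∀ i l, μ.map (V i l) = D)
    (hsupp : D (Set.Icc (0 : ℝ) 1)ᶜ = 0)
    (rank : Fin n → Equiv.Perm (Fin m))
    (SW : Fin m → Ω → ℝ)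
    (hSW : ∀ j ω, SW j ω =
      ∑ i, orderStat (List.ofFn fun l => V i l ω) (m - (rank i j : ℕ)))
    (w : Fin m)
    (hw : ∀ j, (Finset.univ.filter fun i => ((rank i) j : ℕ) = 0).card ≤
      (Finset.univ.filter fun i => ((rank i) w : ℕ) = 0).card) :
    ∀ j, max (1 / (m : ℝ)) (1 / (n : ℝ)) * ∫ ω, SW j ω ∂μ ≤ ∫ ω, SW w ω ∂μ :=
  stmt15_general μ n m V hmeas hindep D hlaw hsupp rank SW hSW w hw
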